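/- Let M ∈ ℝ^{p×k} with p ≥ k+1, let C > 0, R > 0, and define S(M,R) = { x ∈ ℝ^p : D_j(M|x) ≤ C·D_j(M) for all 1 ≤ j ≤ k, and D_{k+1}(M|x) ≤ R }, where (M|x) is M with x appended as an extra column. Let M = U (Σ;0) V be a singular value decomposition with columns U^{(1)},…,U^{(p)} of U, and set τ_i = σ_i(M) for i ≤ k and τ_i = min(σ_k(M), R/D_k(M)) for i ≥ k+1. Then S(M,R) ⊆ { Σ_{i=1}^p y_i U^{(i)} : |y_i| ≤ C'(C,p,k)·τ_i }, for a constant C'(C,p,k) depending only on C, p, k. -/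

import Mathlib

/-!
Write `y = Uᵀ x`. Up to orthogonal factors, which change every `D_j` by at most a factor
depending only on `p` and `k`, the matrix `(M | x)` is `(Σ;0 | y)`, and `D_j(M)` is comparable to
`σ₁ ⋯ σ_j`. For `i > j` the minor of `(Σ;0 | y)` on the rows `1, …, j, i` and the columns
`1, …, j, k+1` is upper triangular with determinant `σ₁ ⋯ σ_j · y_i`. Hence
`|y_i| σ₁ ⋯ σ_j ≲ D_{j+1}(M | x)`, which is `≲ C σ₁ ⋯ σ_{j+1}` for `j < k` and `≤ R` for `j = k`.
Dividing gives `|y_i| ≲ C σ_{j+1}` and `|y_i| ≲ R / D_k(M)`; if some product `σ₁ ⋯ σ_j` vanishes,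
the first vanishing `σ` already forces `y_i = 0`.
-/

open Matrix

noncomputable def maxSubdet {p q : ℕ} (k : ℕ) (M : Matrix (Fin p) (Fin q) ℝ) : ℝ :=
  ⨆ (f : Fin k → Fin p) (g : Fin k → Fin q) (_ : Function.Injective f)
    (_ : Function.Injective g), |(M.submatrix f g).det|

/-- Append the column `x` on the right of the matrix `M`. -/
def appendCol {p k : ℕ} (M : Matrix (Fin p) (Fin k) ℝ) (x : Fin p → ℝ) :
    Matrix (Fin p) (Fin (k + 1)) ℝ :=
  Matrix.of fun i => Fin.snoc (M i) (x i)

/-- The rectangular "diagonal" matrix `(Σ; 0)` with diagonal entries `σ`. -/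
def diagRect (p k : ℕ) (σ : Fin k → ℝ) : Matrix (Fin p) (Fin k) ℝ :=
  Matrix.of fun i j => if (i : ℕ) = (j : ℕ) then σ j else 0

open Finset
open scoped Nat

section MaxSubdet

variable {m p q r j : ℕ}

lemma maxSubdet_nonneg (j : ℕ) (A : Matrix (Fin p) (Fin q) ℝ) : 0 ≤ maxSubdet j A :=
  Real.iSup_nonneg fun _ => Real.iSup_nonneg fun _ => Real.iSup_nonneg fun _ =>
    Real.iSup_nonneg fun _ => abs_nonneg _

lemma abs_det_submatrix_le_maxSubdet (A : Matrix (Fin p) (Fin q) ℝ) {f : Fin j → Fin p}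
    {g : Fin j → Fin q} (hf : f.Injective) (hg : g.Injective) :
    |(A.submatrix f g).det| ≤ maxSubdet j A := by
  have bdd : ∀ {α : Type} [Finite α] (u : α → ℝ), BddAbove (Set.range u) :=
    fun u => (Set.finite_range u).bddAbove
  refine le_trans ?_ (le_ciSup (bdd _) f)
  refine le_trans ?_ (le_ciSup (bdd _) g)
  rw [ciSup_pos hf, ciSup_pos hg]

lemma maxSubdet_le {A : Matrix (Fin p) (Fin q) ℝ} {T : ℝ} (hT : 0 ≤ T)
    (h : ∀ (f : Fin j → Fin p) (g : Fin j → Fin q), f.Injective → g.Injective →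
      |(A.submatrix f g).det| ≤ T) :
    maxSubdet j A ≤ T :=
  Real.iSup_le (fun f => Real.iSup_le (fun g => Real.iSup_le (fun hf =>
    Real.iSup_le (fun hg => h f g hf hg) hT) hT) hT) hT

lemma maxSubdet_submatrix_le (A : Matrix (Fin p) (Fin q) ℝ) {f : Fin m → Fin p}
    {g : Fin r → Fin q} (hf : f.Injective) (hg : g.Injective) :
    maxSubdet j (A.submatrix f g) ≤ maxSubdet j A :=
  maxSubdet_le (maxSubdet_nonneg _ _) fun f' g' hf' hg' => by
    simpa only [submatrix_submatrix] using
      abs_det_submatrix_le_maxSubdet A (hf.comp hf') (hg.comp hg')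

lemma maxSubdet_transpose (A : Matrix (Fin p) (Fin q) ℝ) : maxSubdet j Aᵀ = maxSubdet j A := by
  have key : ∀ {p q : ℕ} (A : Matrix (Fin p) (Fin q) ℝ), maxSubdet j Aᵀ ≤ maxSubdet j A :=
    fun A => maxSubdet_le (maxSubdet_nonneg _ _) fun f g hf hg => by
      simpa [← transpose_submatrix] using abs_det_submatrix_le_maxSubdet A hg hf
  exact (key A).antisymm (by simpa using key Aᵀ)

/-- Expanding `det (W * A)` multilinearly in its rows gives `n ^ j` terms, each a product of
entries of `W` times a minor of `A`. -/
lemma abs_det_mul_le {n : ℕ} (W : Matrix (Fin j) (Fin n) ℝ) (A : Matrix (Fin n) (Fin j) ℝ)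
    (hW : ∀ a b, |W a b| ≤ 1) : |(W * A).det| ≤ n ^ j * maxSubdet j A := by
  have expand : (W * A).det =
      ∑ g : Fin j → Fin n, (∏ a, W a (g a)) * (A.submatrix g id).det := by
    have hrows : W * A = Matrix.of fun a => ∑ b, W a b • A b := by
      ext a c
      simp [mul_apply, Finset.sum_apply]
    rw [hrows]
    exact (detRowAlternating.toMultilinearMap.map_sum (fun a b => W a b • A b)).trans
      (sum_congr rfl fun g _ =>
        detRowAlternating.toMultilinearMap.map_smul_univ (fun a => W a (g a)) (fun a => A (g a)))
  have term : ∀ g : Fin j → Fin n,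
      |(∏ a, W a (g a)) * (A.submatrix g id).det| ≤ maxSubdet j A := by
    intro g
    by_cases hg : g.Injective
    · rw [abs_mul, abs_prod]
      calc (∏ a, |W a (g a)|) * |(A.submatrix g id).det| ≤ 1 * maxSubdet j A := by
            gcongr
            · exact prod_le_one (fun _ _ => abs_nonneg _) fun a _ => hW a (g a)
            · exact abs_det_submatrix_le_maxSubdet A hg Function.injective_id
        _ = maxSubdet j A := one_mul _
    · obtain ⟨a, b, hab, hne⟩ := Function.not_injective_iff.mp hg
      rw [det_zero_of_row_eq hne (by ext; simp [hab]), mul_zero, abs_zero]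
      exact maxSubdet_nonneg _ _
  calc |(W * A).det| ≤ ∑ g : Fin j → Fin n, |(∏ a, W a (g a)) * (A.submatrix g id).det| := by
        rw [expand]; exact abs_sum_le_sum_abs _ _
    _ ≤ ∑ _g : Fin j → Fin n, maxSubdet j A := sum_le_sum fun g _ => term g
    _ = n ^ j * maxSubdet j A := by simp

lemma maxSubdet_mul_left_le (W : Matrix (Fin m) (Fin p) ℝ) (A : Matrix (Fin p) (Fin q) ℝ)
    (hW : ∀ a b, |W a b| ≤ 1) : maxSubdet j (W * A) ≤ p ^ j * maxSubdet j A :=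
  maxSubdet_le (by positivity [maxSubdet_nonneg j A]) fun f g _ hg => by
    rw [submatrix_mul W A f id g Function.bijective_id]
    calc |(W.submatrix f id * A.submatrix id g).det|
        ≤ p ^ j * maxSubdet j (A.submatrix id g) := abs_det_mul_le _ _ fun a b => hW _ _
      _ ≤ p ^ j * maxSubdet j A := by
        gcongr; exact maxSubdet_submatrix_le A Function.injective_id hg

lemma maxSubdet_mul_right_le (A : Matrix (Fin p) (Fin q) ℝ) (W : Matrix (Fin q) (Fin r) ℝ)
    (hW : ∀ a b, |W a b| ≤ 1) : maxSubdet j (A * W) ≤ q ^ j * maxSubdet j A := by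
  simpa only [← maxSubdet_transpose (A * W), transpose_mul, maxSubdet_transpose] using
    maxSubdet_mul_left_le (j := j) Wᵀ Aᵀ fun a b => hW b a

lemma maxSubdet_mul_mul_le (U : Matrix (Fin m) (Fin p) ℝ) (A : Matrix (Fin p) (Fin q) ℝ)
    (V : Matrix (Fin q) (Fin r) ℝ) (hU : ∀ a b, |U a b| ≤ 1) (hV : ∀ a b, |V a b| ≤ 1) :
    maxSubdet j (U * A * V) ≤ (p * q) ^ j * maxSubdet j A :=
  calc maxSubdet j (U * A * V) ≤ q ^ j * maxSubdet j (U * A) := maxSubdet_mul_right_le _ _ hV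
    _ ≤ q ^ j * (p ^ j * maxSubdet j A) := by gcongr; exact maxSubdet_mul_left_le _ _ hU
    _ = (p * q) ^ j * maxSubdet j A := by ring

end MaxSubdet

lemma abs_apply_le_one_of_transpose_mul_self_eq_one {n : ℕ} {U : Matrix (Fin n) (Fin n) ℝ}
    (hU : Uᵀ * U = 1) (a b : Fin n) : |U a b| ≤ 1 := by
  have hUnitary : U ∈ unitaryGroup (Fin n) ℝ := by
    rwa [mem_unitaryGroup_iff', star_eq_conjTranspose, conjTranspose_eq_transpose_of_trivial]
  simpa using entry_norm_bound_of_unitary hUnitary a b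

section AppendCol

variable {m p k : ℕ}

@[simp] lemma appendCol_apply_castSucc (A : Matrix (Fin p) (Fin k) ℝ) (x : Fin p → ℝ) (i : Fin p)
    (b : Fin k) : appendCol A x i b.castSucc = A i b := by
  simp [appendCol]

@[simp] lemma appendCol_apply_last (A : Matrix (Fin p) (Fin k) ℝ) (x : Fin p → ℝ) (i : Fin p) :
    appendCol A x i (Fin.last k) = x i := by
  simp [appendCol]

lemma mul_appendCol (W : Matrix (Fin m) (Fin p) ℝ) (A : Matrix (Fin p) (Fin k) ℝ)
    (x : Fin p → ℝ) : W * appendCol A x = appendCol (W * A) (W *ᵥ x) := by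
  ext i b
  induction b using Fin.lastCases <;> simp [mul_apply, mulVec, dotProduct]

/-- `appendCol (appendCol Wᵀ 0)ᵀ (Pi.single (Fin.last k) 1)` is the block matrix `diag(W, 1)`. -/
lemma appendCol_mul_blockDiag_one (A : Matrix (Fin p) (Fin k) ℝ) (x : Fin p → ℝ)
    (W : Matrix (Fin k) (Fin k) ℝ) :
    appendCol A x * appendCol (appendCol Wᵀ 0)ᵀ (Pi.single (Fin.last k) 1) =
      appendCol (A * W) x := by
  ext i b
  induction b using Fin.lastCases <;> simp [mul_apply, Fin.sum_univ_castSucc]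

lemma maxSubdet_appendCol_mul_le (j : ℕ) (A : Matrix (Fin p) (Fin k) ℝ) (x : Fin p → ℝ)
    {W : Matrix (Fin k) (Fin k) ℝ} (hW : ∀ a b, |W a b| ≤ 1) :
    maxSubdet j (appendCol (A * W) x) ≤ (k + 1) ^ j * maxSubdet j (appendCol A x) := by
  rw [← appendCol_mul_blockDiag_one]
  refine (maxSubdet_mul_right_le _ _ fun a b => ?_).trans (by push_cast; rfl)
  induction a using Fin.lastCases <;> induction b using Fin.lastCases <;> simp [hW]

end AppendCol

lemma Fin.val_le_of_strictMono {j : ℕ} {g : Fin j → ℕ} (hg : StrictMono g) (b : Fin j) :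
    (b : ℕ) ≤ g b := by
  obtain ⟨b, hb⟩ := b
  induction b with
  | zero => exact Nat.zero_le _
  | succ b ih =>
    exact (ih (by omega)).trans_lt (hg (show (⟨b, by omega⟩ : Fin j) < ⟨b + 1, hb⟩ by simp))

lemma prod_comp_le_prod_range {s : ℕ → ℝ} (hs0 : ∀ l, 0 ≤ s l) (hs : Antitone s) {j : ℕ}
    {g : Fin j → ℕ} (hg : g.Injective) : ∏ b, s (g b) ≤ ∏ l ∈ range j, s l := by
  have hsorted : StrictMono (g ∘ Tuple.sort g) :=
    (Tuple.monotone_sort g).strictMono_of_injective (hg.comp (Tuple.sort g).injective)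
  calc ∏ b, s (g b) = ∏ b, s (g (Tuple.sort g b)) :=
        (Equiv.prod_comp (Tuple.sort g) fun b => s (g b)).symm
    _ ≤ ∏ b : Fin j, s b :=
        prod_le_prod (fun _ _ => hs0 _) fun b _ => hs (Fin.val_le_of_strictMono hsorted b)
    _ = ∏ l ∈ range j, s l := Fin.prod_univ_eq_prod_range s j

lemma Matrix.abs_det_le_factorial_mul_prod {n : Type*} [Fintype n] [DecidableEq n]
    {A : Matrix n n ℝ} {c : n → ℝ} (hA : ∀ a b, |A a b| ≤ c b) :
    |A.det| ≤ (Fintype.card n)! * ∏ b, c b :=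
  calc |A.det| ≤ ∑ τ : Equiv.Perm n, |Equiv.Perm.sign τ • ∏ b, A (τ b) b| := by
        rw [det_apply]; exact abs_sum_le_sum_abs _ _
    _ ≤ ∑ _τ : Equiv.Perm n, ∏ b, c b := by
        gcongr with τ
        rw [Units.smul_def, zsmul_eq_mul, abs_mul, abs_unit_intCast, one_mul, abs_prod]
        exact prod_le_prod (fun _ _ => abs_nonneg _) fun b _ => hA _ _
    _ = (Fintype.card n)! * ∏ b, c b := by simp [Fintype.card_perm]

section DiagRect

variable {p k j : ℕ} {σ : Fin k → ℝ}

def padZero (σ : Fin k → ℝ) (l : ℕ) : ℝ := if h : l < k then σ ⟨l, h⟩ else 0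

/-- `σ₀ ⋯ σ_{j-1}`, which is `0` once `j > k`. -/
def leadingProd (σ : Fin k → ℝ) (j : ℕ) : ℝ := ∏ l ∈ range j, padZero σ l

lemma padZero_of_lt (σ : Fin k → ℝ) {l : ℕ} (hl : l < k) : padZero σ l = σ ⟨l, hl⟩ :=
  dif_pos hl

lemma padZero_nonneg (hσ0 : ∀ i, 0 ≤ σ i) (l : ℕ) : 0 ≤ padZero σ l := by
  unfold padZero; split_ifs <;> simp [hσ0]

lemma padZero_antitone (hσ0 : ∀ i, 0 ≤ σ i) (hσ : Antitone σ) : Antitone (padZero σ) := by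
  intro a b hab
  unfold padZero
  split_ifs with hb ha ha
  · exact hσ (Fin.mk_le_mk.mpr hab)
  · omega
  · exact hσ0 _
  · exact le_rfl

lemma leadingProd_nonneg (hσ0 : ∀ i, 0 ≤ σ i) (j : ℕ) : 0 ≤ leadingProd σ j :=
  prod_nonneg fun l _ => padZero_nonneg hσ0 l

lemma abs_diagRect_apply_le (hσ0 : ∀ i, 0 ≤ σ i) (a : Fin p) (b : Fin k) :
    |diagRect p k σ a b| ≤ σ b := by
  simp only [diagRect, of_apply]; split_ifs <;> simp [abs_of_nonneg, hσ0]

lemma maxSubdet_diagRect_le (hσ0 : ∀ i, 0 ≤ σ i) (hσ : Antitone σ) :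
    maxSubdet j (diagRect p k σ) ≤ j ! * leadingProd σ j :=
  maxSubdet_le (by positivity [leadingProd_nonneg hσ0 j]) fun f g _ hg => by
    calc |((diagRect p k σ).submatrix f g).det| ≤ j ! * ∏ b, σ (g b) := by
          refine (abs_det_le_factorial_mul_prod fun a b => ?_).trans_eq (by rw [Fintype.card_fin])
          exact abs_diagRect_apply_le hσ0 (f a) (g b)
      _ = j ! * ∏ b, padZero σ (g b) := by simp [padZero_of_lt σ]
      _ ≤ j ! * leadingProd σ j := by
          gcongr
          exact prod_comp_le_prod_range (padZero_nonneg hσ0) (padZero_antitone hσ0 hσ)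
            (Fin.val_injective.comp hg)

lemma diagRect_submatrix_castLE (σ : Fin k → ℝ) (hjp : j ≤ p) (hjk : j ≤ k) :
    (diagRect p k σ).submatrix (Fin.castLE hjp) (Fin.castLE hjk) =
      diagonal fun a : Fin j => padZero σ a := by
  ext a b
  by_cases hab : a = b
  · subst hab; simp [diagRect, padZero_of_lt σ (a.2.trans_le hjk)]; rfl
  · simp [diagRect, hab, Fin.val_eq_val]

lemma leadingProd_le_maxSubdet_diagRect (σ : Fin k → ℝ) (hjp : j ≤ p) (hjk : j ≤ k) :
    leadingProd σ j ≤ maxSubdet j (diagRect p k σ) := by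
  refine le_trans (le_of_eq ?_) ((le_abs_self _).trans (abs_det_submatrix_le_maxSubdet _
    (Fin.castLE_injective hjp) (Fin.castLE_injective hjk)))
  rw [diagRect_submatrix_castLE σ hjp hjk, det_diagonal, leadingProd,
    Fin.prod_univ_eq_prod_range (padZero σ)]

lemma abs_mul_leadingProd_le_maxSubdet_appendCol (hσ0 : ∀ i, 0 ≤ σ i) (y : Fin p → ℝ)
    (i : Fin p) (hji : j ≤ i) (hjk : j ≤ k) :
    |y i| * leadingProd σ j ≤ maxSubdet (j + 1) (appendCol (diagRect p k σ) y) := by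
  have hjp : j ≤ p := hji.trans i.2.le
  set f : Fin (j + 1) → Fin p := Fin.snoc (Fin.castLE hjp) i
  set g : Fin (j + 1) → Fin (k + 1) :=
    Fin.snoc (fun a => (Fin.castLE hjk a).castSucc) (Fin.last k)
  have hf : f.Injective := Fin.snoc_injective_of_injective (Fin.castLE_injective hjp)
    (by rintro ⟨a, ha⟩; have := congrArg Fin.val ha; simp at this; omega)
  have hg : g.Injective := Fin.snoc_injective_of_injective
    ((Fin.castSucc_injective k).comp (Fin.castLE_injective hjk))
    (by rintro ⟨a, ha⟩; have := congrArg Fin.val ha; simp at this; omega)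
  set S := (appendCol (diagRect p k σ) y).submatrix f g
  have hentry : ∀ a b, S a b = appendCol (diagRect p k σ) y (f a) (g b) := fun _ _ => rfl
  simp only [f, g] at hentry
  have hS : S.IsUpperTriangular := by
    intro a b hba
    induction a using Fin.lastCases <;> induction b using Fin.lastCases
    · exact absurd hba (lt_irrefl _)
    · simp only [hentry, Fin.snoc_castSucc, Fin.snoc_last, appendCol_apply_castSucc, diagRect,
        of_apply, Fin.val_castLE]
      rw [if_neg (by omega)]
    · exact absurd hba (not_lt.mpr (Fin.le_last _))
    · rename_i a b
      have hba : (b : ℕ) < a := hba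
      simp only [hentry, Fin.snoc_castSucc, appendCol_apply_castSucc, diagRect,
        of_apply, Fin.val_castLE]
      rw [if_neg (by omega)]
  have hdet : S.det = leadingProd σ j * y i := by
    rw [det_of_isUpperTriangular hS, Fin.prod_univ_castSucc, leadingProd,
      ← Fin.prod_univ_eq_prod_range]
    simp only [hentry, Fin.snoc_castSucc, Fin.snoc_last, appendCol_apply_castSucc,
      appendCol_apply_last, diagRect, of_apply, Fin.val_castLE, if_true]
    exact congrArg (· * y i) (prod_congr rfl fun a _ => (padZero_of_lt σ (a.2.trans_le hjk)).symm)
  calc |y i| * leadingProd σ j = |S.det| := by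
        rw [hdet, abs_mul, abs_of_nonneg (leadingProd_nonneg hσ0 j), mul_comm]
    _ ≤ maxSubdet (j + 1) (appendCol (diagRect p k σ) y) := abs_det_submatrix_le_maxSubdet _ hf hg

end DiagRect

section SVD

variable {p k j : ℕ} {U : Matrix (Fin p) (Fin p) ℝ} {V : Matrix (Fin k) (Fin k) ℝ}
  {σ : Fin k → ℝ}

lemma maxSubdet_svd_le (hU : Uᵀ * U = 1) (hV : Vᵀ * V = 1) (hσ0 : ∀ i, 0 ≤ σ i)
    (hσ : Antitone σ) :
    maxSubdet j (U * diagRect p k σ * V) ≤ (p * k) ^ j * j ! * leadingProd σ j :=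
  calc maxSubdet j (U * diagRect p k σ * V) ≤ (p * k) ^ j * maxSubdet j (diagRect p k σ) :=
        maxSubdet_mul_mul_le _ _ _ (abs_apply_le_one_of_transpose_mul_self_eq_one hU)
          (abs_apply_le_one_of_transpose_mul_self_eq_one hV)
    _ ≤ (p * k) ^ j * (j ! * leadingProd σ j) := by gcongr; exact maxSubdet_diagRect_le hσ0 hσ
    _ = (p * k) ^ j * j ! * leadingProd σ j := by ring

lemma leadingProd_le_maxSubdet_svd (hU : Uᵀ * U = 1) (hV : Vᵀ * V = 1) (hjp : j ≤ p)
    (hjk : j ≤ k) : leadingProd σ j ≤ (p * k) ^ j * maxSubdet j (U * diagRect p k σ * V) := by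
  have hdiag : diagRect p k σ = Uᵀ * (U * diagRect p k σ * V) * Vᵀ := by
    rw [← Matrix.mul_assoc, ← Matrix.mul_assoc, hU, Matrix.one_mul, Matrix.mul_assoc,
      mul_eq_one_comm.mp hV, Matrix.mul_one]
  calc leadingProd σ j ≤ maxSubdet j (diagRect p k σ) :=
        leadingProd_le_maxSubdet_diagRect σ hjp hjk
    _ ≤ (p * k) ^ j * maxSubdet j (U * diagRect p k σ * V) := by
        conv_lhs => rw [hdiag]
        exact maxSubdet_mul_mul_le _ _ _
          (fun a b => abs_apply_le_one_of_transpose_mul_self_eq_one hU b a)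
          (fun a b => abs_apply_le_one_of_transpose_mul_self_eq_one hV b a)

lemma abs_mulVec_mul_leadingProd_le (hU : Uᵀ * U = 1) (hV : Vᵀ * V = 1) (hσ0 : ∀ i, 0 ≤ σ i)
    (x : Fin p → ℝ) (i : Fin p) (hji : j ≤ i) (hjk : j ≤ k) :
    |(Uᵀ *ᵥ x) i| * leadingProd σ j ≤
      (p * (k + 1)) ^ (j + 1) * maxSubdet (j + 1) (appendCol (U * diagRect p k σ * V) x) := by
  set M := U * diagRect p k σ * V
  have hdiag : appendCol (diagRect p k σ) (Uᵀ *ᵥ x) = Uᵀ * appendCol (M * Vᵀ) x := by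
    rw [mul_appendCol]
    congr 1
    simp only [M, Matrix.mul_assoc, mul_eq_one_comm.mp hV, Matrix.mul_one]
    rw [← Matrix.mul_assoc, hU, Matrix.one_mul]
  calc |(Uᵀ *ᵥ x) i| * leadingProd σ j
      ≤ maxSubdet (j + 1) (appendCol (diagRect p k σ) (Uᵀ *ᵥ x)) :=
        abs_mul_leadingProd_le_maxSubdet_appendCol hσ0 _ i hji hjk
    _ ≤ p ^ (j + 1) * maxSubdet (j + 1) (appendCol (M * Vᵀ) x) := by
        rw [hdiag]
        exact maxSubdet_mul_left_le _ _
          fun a b => abs_apply_le_one_of_transpose_mul_self_eq_one hU b a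
    _ ≤ p ^ (j + 1) * ((k + 1) ^ (j + 1) * maxSubdet (j + 1) (appendCol M x)) := by
        gcongr
        exact maxSubdet_appendCol_mul_le _ _ _
          fun a b => abs_apply_le_one_of_transpose_mul_self_eq_one hV b a
    _ = (p * (k + 1)) ^ (j + 1) * maxSubdet (j + 1) (appendCol M x) := by rw [mul_pow]; ring

end SVD

section ProdRange

variable {s : ℕ → ℝ} {a K : ℝ}

lemma le_zero_of_prod_range_eq_zero (hs0 : ∀ l, 0 ≤ s l) {n : ℕ}
    (h : ∀ j < n, a * ∏ l ∈ range j, s l ≤ K * ∏ l ∈ range (j + 1), s l)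
    (hn : ∏ l ∈ range n, s l = 0) : a ≤ 0 := by
  induction n with
  | zero => simp at hn
  | succ n ih =>
    rw [prod_range_succ, mul_eq_zero] at hn
    rcases (prod_nonneg fun l _ => hs0 l : 0 ≤ ∏ l ∈ range n, s l).eq_or_lt with hP | hP
    · exact ih (fun j hj => h j (by omega)) hP.symm
    · have hsn : s n = 0 := hn.resolve_left hP.ne'
      have := h n (by omega)
      rw [prod_range_succ, hsn, mul_zero, mul_zero] at this
      exact nonpos_of_mul_nonpos_left this hP

lemma le_mul_of_mul_prod_range_le (hs0 : ∀ l, 0 ≤ s l) (hK : 0 ≤ K) {n : ℕ}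
    (h : ∀ j ≤ n, a * ∏ l ∈ range j, s l ≤ K * ∏ l ∈ range (j + 1), s l) : a ≤ K * s n := by
  rcases (prod_nonneg fun l _ => hs0 l : 0 ≤ ∏ l ∈ range n, s l).eq_or_lt with hP | hP
  · exact (le_zero_of_prod_range_eq_zero hs0 (fun j hj => h j hj.le) hP.symm).trans
      (mul_nonneg hK (hs0 n))
  · have := h n le_rfl
    rw [prod_range_succ] at this
    exact le_of_mul_le_mul_right (by linarith) hP

end ProdRange

/-- The first condition defining `S(M, R)`. -/
def MaxSubdetGrowthLE {p k : ℕ} (C : ℝ) (M : Matrix (Fin p) (Fin k) ℝ) (x : Fin p → ℝ) : Prop :=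
  ∀ j : ℕ, 1 ≤ j → j ≤ k → maxSubdet j (appendCol M x) ≤ C * maxSubdet j M

section Estimates

variable {p k j : ℕ} {U : Matrix (Fin p) (Fin p) ℝ} {V : Matrix (Fin k) (Fin k) ℝ}
  {σ : Fin k → ℝ} {x : Fin p → ℝ} {C : ℝ}

/-- A common bound for the constants `(p * k) ^ j * j !` and `(p * (k + 1)) ^ (j + 1)` that the
orthogonal factors produce. -/
def minorConst (p k : ℕ) : ℝ := ((p + 1) * (k + 1)) ^ (k + 1) * (k + 1)!

lemma minorConst_pos (p k : ℕ) : 0 < minorConst p k := by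
  unfold minorConst; positivity

lemma mul_pow_mul_factorial_le_minorConst {a b : ℝ} (ha : 0 ≤ a) (hap : a ≤ p) (hb : 0 ≤ b)
    (hbk : b ≤ k + 1) (hj : j ≤ k + 1) : (a * b) ^ j * j ! ≤ minorConst p k := by
  have hbase : 1 ≤ ((p : ℝ) + 1) * (k + 1) := by
    nlinarith [(p.cast_nonneg : (0 : ℝ) ≤ p), (k.cast_nonneg : (0 : ℝ) ≤ k)]
  unfold minorConst
  gcongr
  calc (a * b) ^ j ≤ (((p : ℝ) + 1) * (k + 1)) ^ j := by gcongr; linarith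
    _ ≤ (((p : ℝ) + 1) * (k + 1)) ^ (k + 1) := pow_le_pow_right₀ hbase hj

lemma maxSubdet_svd_le_minorConst (hU : Uᵀ * U = 1) (hV : Vᵀ * V = 1) (hσ0 : ∀ i, 0 ≤ σ i)
    (hσ : Antitone σ) (hj : j ≤ k + 1) :
    maxSubdet j (U * diagRect p k σ * V) ≤ minorConst p k * leadingProd σ j :=
  (maxSubdet_svd_le hU hV hσ0 hσ).trans <| by
    gcongr
    · exact leadingProd_nonneg hσ0 j
    · exact mul_pow_mul_factorial_le_minorConst (by positivity) le_rfl (by positivity)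
        (by linarith) hj

lemma abs_mulVec_mul_leadingProd_le_minorConst (hU : Uᵀ * U = 1) (hV : Vᵀ * V = 1)
    (hσ0 : ∀ i, 0 ≤ σ i) (x : Fin p → ℝ) (i : Fin p) (hji : j ≤ i) (hjk : j ≤ k) :
    |(Uᵀ *ᵥ x) i| * leadingProd σ j ≤
      minorConst p k * maxSubdet (j + 1) (appendCol (U * diagRect p k σ * V) x) :=
  (abs_mulVec_mul_leadingProd_le hU hV hσ0 x i hji hjk).trans <| by
    gcongr
    · exact maxSubdet_nonneg _ _
    · exact (le_mul_of_one_le_right (by positivity) (by exact_mod_cast (j + 1).factorial_pos)).trans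
        (mul_pow_mul_factorial_le_minorConst (by positivity) le_rfl (by positivity) le_rfl
          (by omega))

lemma abs_mulVec_mul_leadingProd_le_succ (hU : Uᵀ * U = 1) (hV : Vᵀ * V = 1)
    (hσ0 : ∀ i, 0 ≤ σ i) (hσ : Antitone σ)
    (hD : MaxSubdetGrowthLE C (U * diagRect p k σ * V) x)
    (i : Fin p) (hji : j ≤ i) (hjk : j < k) :
    |(Uᵀ *ᵥ x) i| * leadingProd σ j ≤ minorConst p k ^ 2 * max C 1 * leadingProd σ (j + 1) := by
  set c := minorConst p k
  have hc : 0 ≤ c := (minorConst_pos p k).le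
  set M := U * diagRect p k σ * V
  calc |(Uᵀ *ᵥ x) i| * leadingProd σ j ≤ c * maxSubdet (j + 1) (appendCol M x) :=
        abs_mulVec_mul_leadingProd_le_minorConst hU hV hσ0 x i hji hjk.le
    _ ≤ c * (max C 1 * maxSubdet (j + 1) M) := by
        gcongr
        exact (hD (j + 1) (by omega) hjk).trans
          (by gcongr; exacts [maxSubdet_nonneg _ _, le_max_left _ _])
    _ ≤ c * (max C 1 * (c * leadingProd σ (j + 1))) := by
        gcongr; exact maxSubdet_svd_le_minorConst hU hV hσ0 hσ (by omega)
    _ = c ^ 2 * max C 1 * leadingProd σ (j + 1) := by ring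

lemma abs_mulVec_le_mul (hU : Uᵀ * U = 1) (hV : Vᵀ * V = 1) (hσ0 : ∀ i, 0 ≤ σ i)
    (hσ : Antitone σ)
    (hD : MaxSubdetGrowthLE C (U * diagRect p k σ * V) x)
    (i : Fin p) (l : Fin k) (hli : (l : ℕ) ≤ i) :
    |(Uᵀ *ᵥ x) i| ≤ minorConst p k ^ 2 * max C 1 * σ l := by
  simpa [padZero_of_lt σ l.2] using
    le_mul_of_mul_prod_range_le (padZero_nonneg hσ0) (by positivity [minorConst_pos p k])
      (n := l) fun j hj =>
        abs_mulVec_mul_leadingProd_le_succ hU hV hσ0 hσ hD i (by omega) (by omega)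

lemma abs_mulVec_le_mul_div (hU : Uᵀ * U = 1) (hV : Vᵀ * V = 1) (hσ0 : ∀ i, 0 ≤ σ i)
    (hσ : Antitone σ) {R : ℝ} (hR : 0 ≤ R)
    (hD : MaxSubdetGrowthLE C (U * diagRect p k σ * V) x)
    (hDlast : maxSubdet (k + 1) (appendCol (U * diagRect p k σ * V) x) ≤ R)
    (i : Fin p) (hki : k ≤ i) :
    |(Uᵀ *ᵥ x) i| ≤ minorConst p k ^ 2 * max C 1 * (R / maxSubdet k (U * diagRect p k σ * V)) := by
  set c := minorConst p k
  have hc : 0 < c := minorConst_pos p k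
  set M := U * diagRect p k σ * V
  have hsteps := fun j (hj : j < k) =>
    abs_mulVec_mul_leadingProd_le_succ hU hV hσ0 hσ hD i (by omega) hj
  rcases (leadingProd_nonneg hσ0 k).eq_or_lt with h0 | hpos
  · exact (le_zero_of_prod_range_eq_zero (padZero_nonneg hσ0) hsteps h0.symm).trans
      (by positivity [maxSubdet_nonneg k M])
  have hDpos : 0 < maxSubdet k M := pos_of_mul_pos_right
    (hpos.trans_le (leadingProd_le_maxSubdet_svd hU hV (hki.trans i.2.le) le_rfl)) (by positivity)
  rw [mul_div_assoc', le_div_iff₀ hDpos]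
  calc |(Uᵀ *ᵥ x) i| * maxSubdet k M ≤ |(Uᵀ *ᵥ x) i| * (c * leadingProd σ k) := by
        gcongr; exact maxSubdet_svd_le_minorConst hU hV hσ0 hσ (by omega)
    _ = c * (|(Uᵀ *ᵥ x) i| * leadingProd σ k) := by ring
    _ ≤ c * (c * R) := mul_le_mul_of_nonneg_left
        ((abs_mulVec_mul_leadingProd_le_minorConst hU hV hσ0 x i hki le_rfl).trans
          (mul_le_mul_of_nonneg_left hDlast hc.le)) hc.le
    _ = c ^ 2 * 1 * R := by ring
    _ ≤ c ^ 2 * max C 1 * R := by gcongr; exact le_max_right _ _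

end Estimates

/-- if `x ∈ S(M,R)`, i.e. appending the column `x` to `M` increases the maximal
subdeterminants `D_j` by at most a factor `C` (for `1 ≤ j ≤ k`) and `D_{k+1}(M|x) ≤ R`, then
`x = U y` with `|yᵢ| ≤ C'(C,p,k)·τᵢ`, where `M = U (Σ;0) V` is a singular value decomposition,
`τᵢ = σᵢ` for `i ≤ k` and `τᵢ = min(σ_k, R / D_k(M))` for `i ≥ k+1`. -/
theorem stmt14 (p k : ℕ) (hk : 0 < k) (C : ℝ) :
    ∃ C' : ℝ, 0 < C' ∧
      ∀ (R : ℝ) (U : Matrix (Fin p) (Fin p) ℝ) (V : Matrix (Fin k) (Fin k) ℝ)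
        (σ : Fin k → ℝ) (Mk : Matrix (Fin p) (Fin k) ℝ),
        0 < R → Uᵀ * U = 1 → Vᵀ * V = 1 →
        (∀ i, 0 ≤ σ i) → (∀ i j : Fin k, i ≤ j → σ j ≤ σ i) →
        Mk = U * diagRect p k σ * V →
        ∀ x : Fin p → ℝ,
          (∀ j : ℕ, 1 ≤ j → j ≤ k →
            maxSubdet j (appendCol Mk x) ≤ C * maxSubdet j Mk) →
          maxSubdet (k + 1) (appendCol Mk x) ≤ R →
          ∃ y : Fin p → ℝ,
            (∀ i : Fin p,
              |y i| ≤ C' * (if h : (i : ℕ) < k then σ ⟨(i : ℕ), h⟩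
                else min (σ ⟨k - 1, by omega⟩) (R / maxSubdet k Mk))) ∧
            x = U.mulVec y := by
  have hc := minorConst_pos p k
  refine ⟨minorConst p k ^ 2 * max C 1, by positivity, ?_⟩
  rintro R U V σ _ hR hU hV hσ0 hσ rfl x hD hDlast
  refine ⟨Uᵀ *ᵥ x, fun i => ?_, by simp [mul_eq_one_comm.mp hU]⟩
  split_ifs with hik
  · exact abs_mulVec_le_mul hU hV hσ0 hσ hD i ⟨i, hik⟩ le_rfl
  · rw [mul_min_of_nonneg _ _ (by positivity)]
    exact le_min (abs_mulVec_le_mul hU hV hσ0 hσ hD i ⟨k - 1, by omega⟩ (by simp; omega))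
      (abs_mulVec_le_mul_div hU hV hσ0 hσ hR.le hD hDlast i (by omega))
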